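/- arXiv:1201.5229 — 3 statements merged into one kernel-verified Lean document; each statement's English description precedes it below -/
import Mathlib

section
/- The matrix G − D is negative semidefinite: for every x ∈ ℝ^n, xᵀ(G − D)x ≤ 0. (This is the Hessian negative-semidefiniteness underlying Theorem 1: a solution of the cross-entropy optimality equations is a maximum.) -/
open Matrix

/-! The quadratic form of `G = v vᵀ` is `∑ₛ (∑ₖ xₖ vₖ(s))²`. For each `s`,
weighted Cauchy–Schwarz with weights `λₖ vₖ(s)`, which sum to `1`, gives
`(∑ₖ xₖ vₖ(s))² ≤ ∑ₖ xₖ² vₖ(s) / λₖ`, and summing over `s` yields exactly the quadratic form of `D`. -/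

section

variable {R ι σ : Type*} [Fintype ι] [Fintype σ]

theorem dotProduct_mul_transpose_mulVec [CommSemiring R] (A : Matrix ι σ R) (x : ι → R) :
    x ⬝ᵥ (A * Aᵀ) *ᵥ x = (x ᵥ* A) ⬝ᵥ (x ᵥ* A) := by
  rw [← mulVec_mulVec, dotProduct_mulVec, mulVec_transpose]

theorem dotProduct_diagonal_mulVec [CommSemiring R] [DecidableEq ι] (d x : ι → R) :
    x ⬝ᵥ diagonal d *ᵥ x = ∑ k, d k * x k ^ 2 := by
  simp only [dotProduct, mulVec_diagonal]
  exact Finset.sum_congr rfl fun k _ => by ring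

variable [Field R] [LinearOrder R] [IsStrictOrderedRing R]

theorem sq_sum_mul_le_sum_mul_mul_sum_div {w lam : ι → R} (hw : ∀ k, 0 ≤ w k)
    (hlam : ∀ k, 0 < lam k) (x : ι → R) :
    (∑ k, x k * w k) ^ 2 ≤ (∑ k, lam k * w k) * ∑ k, x k ^ 2 * w k / lam k :=
  Finset.sum_sq_le_sum_mul_sum_of_sq_le_mul _
    (fun k _ => mul_nonneg (hlam k).le (hw k))
    (fun k _ => div_nonneg (mul_nonneg (sq_nonneg _) (hw k)) (hlam k).le)
    (fun k _ => le_of_eq (by field_simp [(hlam k).ne']))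

theorem dotProduct_mul_transpose_sub_diagonal_mulVec_nonpos [DecidableEq ι]
    {v : Matrix ι σ R} (hv : ∀ k s, 0 ≤ v k s) {lam : ι → R} (hlam : ∀ k, 0 < lam k)
    (hnorm : ∀ s, ∑ k, lam k * v k s = 1) (x : ι → R) :
    x ⬝ᵥ (v * vᵀ - diagonal fun k => (1 / lam k) * ∑ s, v k s) *ᵥ x ≤ 0 := by
  rw [sub_mulVec, dotProduct_sub, dotProduct_mul_transpose_mulVec, dotProduct_diagonal_mulVec,
    sub_nonpos]
  calc (x ᵥ* v) ⬝ᵥ (x ᵥ* v) = ∑ s, (∑ k, x k * v k s) ^ 2 := by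
        simp only [dotProduct, vecMul, sq]
    _ ≤ ∑ s, ∑ k, x k ^ 2 * v k s / lam k := Finset.sum_le_sum fun s _ => by
        simpa [hnorm s] using sq_sum_mul_le_sum_mul_mul_sum_div (hv · s) hlam x
    _ = ∑ k, (1 / lam k) * (∑ s, v k s) * x k ^ 2 := by
        rw [Finset.sum_comm]
        refine Finset.sum_congr rfl fun k _ => ?_
        rw [Finset.mul_sum, Finset.sum_mul]
        exact Finset.sum_congr rfl fun s _ => by ring

end

theorem gram_sub_diag_negSemidef_general
    (n N : ℕ)
    (v : Fin n → Fin N → ℝ) (hv : ∀ k s, 0 ≤ v k s)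
    (lam : Fin n → ℝ) (hlam : ∀ k, 0 < lam k)
    (hnorm : ∀ s : Fin N, ∑ k : Fin n, lam k * v k s = 1)
    (G D : Matrix (Fin n) (Fin n) ℝ)
    (hG : ∀ k k', G k k' = ∑ s : Fin N, v k s * v k' s)
    (hD : D = Matrix.diagonal fun k => (1 / lam k) * ∑ s : Fin N, v k s) :
    ∀ x : Fin n → ℝ, x ⬝ᵥ ((G - D) *ᵥ x) ≤ 0 := by
  have hG' : G = (of v) * (of v)ᵀ := by
    ext k k'
    simp [hG, mul_apply]
  rw [hG', hD]
  exact dotProduct_mul_transpose_sub_diagonal_mulVec_nonpos hv hlam hnorm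

/-- The matrix `G − D` is negative semidefinite: for every `x ∈ ℝ^n`,
`xᵀ(G − D)x ≤ 0`. Here `v k ∈ ℝ^N` have nonnegative entries, `λ_k > 0`,
`Σ_k λ_k v_k(s) = 1` for every `s`, `G` is the Gram matrix of the `v_k`
and `D` is diagonal with entries `(1/λ_k)⟨v_k, 𝟙⟩`. -/
theorem gram_sub_diag_negSemidef
    (n N : ℕ) (hn : 0 < n) (hN : 0 < N)
    (v : Fin n → Fin N → ℝ) (hv : ∀ k s, 0 ≤ v k s)
    (lam : Fin n → ℝ) (hlam : ∀ k, 0 < lam k)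
    (hnorm : ∀ s : Fin N, ∑ k : Fin n, lam k * v k s = 1)
    (G D : Matrix (Fin n) (Fin n) ℝ)
    (hG : ∀ k k', G k k' = ∑ s : Fin N, v k s * v k' s)
    (hD : D = Matrix.diagonal fun k => (1 / lam k) * ∑ s : Fin N, v k s) :
    ∀ x : Fin n → ℝ, x ⬝ᵥ ((G - D) *ᵥ x) ≤ 0 :=
  gram_sub_diag_negSemidef_general n N v hv lam hlam hnorm G D hG hD
end

section
/- For every x ∈ ℝ^n one has the symmetrization identity xᵀDx − xᵀGx = Σ_{1 ≤ k < k' ≤ n} ( √(λ_{k'}/λ_k)·x_k − √(λ_k/λ_{k'})·x_{k'} )² · ⟨v_k, v_{k'}⟩, and in particular xᵀDx − xᵀGx ≥ 0. -/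
/-!
Summing the normalization `∑ k', λ_{k'} v_{k'} = 1` against `v_k` gives
`⟨v_k, 𝟙⟩ = ∑ k', λ_{k'} g_{kk'}`, so
`xᵀDx − xᵀGx = ∑_{k,k'} (λ_{k'}/λ_k x_k² − x_k x_{k'}) g_{kk'}`.
The diagonal terms vanish, and since `g` is symmetric the terms for `(k, k')` and `(k', k)`
combine into `(λ_{k'}/λ_k x_k² − 2 x_k x_{k'} + λ_k/λ_{k'} x_{k'}²) g_{kk'}`, a perfect square
because `√(λ_{k'}/λ_k) √(λ_k/λ_{k'}) = 1`. Nonnegativity follows from `g_{kk'} ≥ 0`.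
-/

open Matrix Finset

theorem Finset.sum_sum_eq_sum_diag_add_sum_sum_lt {ι M : Type*} [Fintype ι] [LinearOrder ι]
    [AddCommMonoid M] (F : ι → ι → M) :
    ∑ k, ∑ k', F k k' =
      ∑ k, F k k + ∑ k, ∑ k' ∈ univ.filter (k < ·), (F k k' + F k' k) := by
  have htri : ∀ k k', F k k' = (if k = k' then F k k' else 0) +
      ((if k < k' then F k k' else 0) + if k' < k then F k k' else 0) := by
    intro k k'
    rcases lt_trichotomy k k' with h | rfl | h
    · simp [h, h.not_gt, h.ne]
    · simp
    · simp [h, h.not_gt, h.ne']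
  conv_lhs => rw [sum_congr rfl fun k _ => sum_congr rfl fun k' _ => htri k k']
  simp only [sum_add_distrib, sum_ite_eq, mem_univ, if_true, sum_filter]
  rw [sum_comm (f := fun k k' => if k' < k then F k k' else 0)]

theorem sum_eq_sum_mul_inner_of_sum_mul_eq_one {ι σ : Type*} [Fintype ι] [Fintype σ]
    (v : ι → σ → ℝ) (lam : ι → ℝ) (hnorm : ∀ s, ∑ k, lam k * v k s = 1) (k : ι) :
    ∑ s, v k s = ∑ k', lam k' * ∑ s, v k s * v k' s := by
  calc ∑ s, v k s = ∑ s, v k s * ∑ k', lam k' * v k' s := by simp [hnorm]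
    _ = ∑ k', lam k' * ∑ s, v k s * v k' s := by
      simp only [mul_sum]
      rw [sum_comm]
      exact sum_congr rfl fun _ _ => sum_congr rfl fun _ _ => by ring

theorem sqrt_div_mul_sub_sqrt_div_mul_sq {a b : ℝ} (ha : 0 < a) (hb : 0 < b) (x y : ℝ) :
    (√(b / a) * x - √(a / b) * y) ^ 2 = b / a * x ^ 2 - 2 * (x * y) + a / b * y ^ 2 := by
  have hprod : √(b / a) * √(a / b) = 1 := by
    rw [← Real.sqrt_mul (by positivity), div_mul_div_comm, mul_comm b, div_self (by positivity),
      Real.sqrt_one]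
  calc (√(b / a) * x - √(a / b) * y) ^ 2
      = √(b / a) ^ 2 * x ^ 2 - 2 * (√(b / a) * √(a / b)) * (x * y) + √(a / b) ^ 2 * y ^ 2 := by
        ring
    _ = _ := by rw [Real.sq_sqrt (by positivity), Real.sq_sqrt (by positivity), hprod]; ring

section
variable {ι σ : Type*} [Fintype ι] [DecidableEq ι] [Fintype σ]

theorem dotProduct_diagonal_mulVec_sub_gram (v : ι → σ → ℝ) (lam : ι → ℝ)
    (hnorm : ∀ s, ∑ k, lam k * v k s = 1) (G : Matrix ι ι ℝ)
    (hG : ∀ k k', G k k' = ∑ s, v k s * v k' s) (x : ι → ℝ) :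
    x ⬝ᵥ (diagonal (fun k => 1 / lam k * ∑ s, v k s) *ᵥ x) - x ⬝ᵥ (G *ᵥ x) =
      ∑ k, ∑ k', (lam k' / lam k * x k ^ 2 - x k * x k') * ∑ s, v k s * v k' s := by
  have hdiag : x ⬝ᵥ (diagonal (fun k => 1 / lam k * ∑ s, v k s) *ᵥ x) =
      ∑ k, ∑ k', lam k' / lam k * x k ^ 2 * ∑ s, v k s * v k' s := by
    simp only [dotProduct, mulVec_diagonal, sum_eq_sum_mul_inner_of_sum_mul_eq_one v lam hnorm]
    refine sum_congr rfl fun k _ => ?_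
    rw [mul_sum, sum_mul, mul_sum]
    exact sum_congr rfl fun k' _ => by ring
  have hgram : x ⬝ᵥ (G *ᵥ x) = ∑ k, ∑ k', x k * x k' * ∑ s, v k s * v k' s := by
    simp only [dotProduct, mulVec, hG, mul_sum, sum_mul]
    exact sum_congr rfl fun k _ => sum_congr rfl fun k' _ => sum_congr rfl fun s _ => by ring
  simp only [hdiag, hgram, ← sum_sub_distrib, sub_mul]

theorem dotProduct_diagonal_mulVec_sub_gram_eq_sum_lt [LinearOrder ι] (v : ι → σ → ℝ)
    (lam : ι → ℝ) (hlam : ∀ k, 0 < lam k) (hnorm : ∀ s, ∑ k, lam k * v k s = 1)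
    (G : Matrix ι ι ℝ) (hG : ∀ k k', G k k' = ∑ s, v k s * v k' s) (x : ι → ℝ) :
    x ⬝ᵥ (diagonal (fun k => 1 / lam k * ∑ s, v k s) *ᵥ x) - x ⬝ᵥ (G *ᵥ x) =
      ∑ k, ∑ k' ∈ univ.filter (k < ·),
        (√(lam k' / lam k) * x k - √(lam k / lam k') * x k') ^ 2 * ∑ s, v k s * v k' s := by
  rw [dotProduct_diagonal_mulVec_sub_gram v lam hnorm G hG,
    sum_sum_eq_sum_diag_add_sum_sum_lt]
  have hdiag : ∀ k, lam k / lam k * x k ^ 2 - x k * x k = 0 := fun k => by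
    rw [div_self (hlam k).ne']; ring
  simp only [hdiag, zero_mul, sum_const_zero, zero_add]
  refine sum_congr rfl fun k _ => sum_congr rfl fun k' _ => ?_
  rw [sqrt_div_mul_sub_sqrt_div_mul_sq (hlam k) (hlam k')]
  simp only [mul_comm (v k' _) (v k _)]
  ring

end

theorem quadratic_form_symmetrization_general
    (n N : ℕ)
    (v : Fin n → Fin N → ℝ) (hv : ∀ k s, 0 ≤ v k s)
    (lam : Fin n → ℝ) (hlam : ∀ k, 0 < lam k)
    (hnorm : ∀ s : Fin N, ∑ k : Fin n, lam k * v k s = 1)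
    (G D : Matrix (Fin n) (Fin n) ℝ)
    (hG : ∀ k k', G k k' = ∑ s : Fin N, v k s * v k' s)
    (hD : D = Matrix.diagonal fun k => (1 / lam k) * ∑ s : Fin N, v k s)
    (x : Fin n → ℝ) :
    x ⬝ᵥ (D *ᵥ x) - x ⬝ᵥ (G *ᵥ x) =
      ∑ k : Fin n, ∑ k' ∈ Finset.univ.filter (fun k' => k < k'),
        (Real.sqrt (lam k' / lam k) * x k - Real.sqrt (lam k / lam k') * x k') ^ 2 *
          (∑ s : Fin N, v k s * v k' s) ∧
    0 ≤ x ⬝ᵥ (D *ᵥ x) - x ⬝ᵥ (G *ᵥ x) := by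
  subst hD
  have hsym := dotProduct_diagonal_mulVec_sub_gram_eq_sum_lt v lam hlam hnorm G hG x
  refine ⟨hsym, hsym ▸ ?_⟩
  exact sum_nonneg fun k _ => sum_nonneg fun k' _ =>
    mul_nonneg (sq_nonneg _) (sum_nonneg fun s _ => mul_nonneg (hv k s) (hv k' s))

/-- Symmetrization identity: `xᵀDx − xᵀGx` equals the sum over pairs `k < k'` of
`(√(λ_{k'}/λ_k)x_k − √(λ_k/λ_{k'})x_{k'})² ⟨v_k, v_{k'}⟩`, and in particular
`xᵀDx − xᵀGx ≥ 0`. -/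
theorem quadratic_form_symmetrization
    (n N : ℕ) (hn : 0 < n) (hN : 0 < N)
    (v : Fin n → Fin N → ℝ) (hv : ∀ k s, 0 ≤ v k s)
    (lam : Fin n → ℝ) (hlam : ∀ k, 0 < lam k)
    (hnorm : ∀ s : Fin N, ∑ k : Fin n, lam k * v k s = 1)
    (G D : Matrix (Fin n) (Fin n) ℝ)
    (hG : ∀ k k', G k k' = ∑ s : Fin N, v k s * v k' s)
    (hD : D = Matrix.diagonal fun k => (1 / lam k) * ∑ s : Fin N, v k s)
    (x : Fin n → ℝ) :
    x ⬝ᵥ (D *ᵥ x) - x ⬝ᵥ (G *ᵥ x) =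
      ∑ k : Fin n, ∑ k' ∈ Finset.univ.filter (fun k' => k < k'),
        (Real.sqrt (lam k' / lam k) * x k - Real.sqrt (lam k / lam k') * x k') ^ 2 *
          (∑ s : Fin N, v k s * v k' s) ∧
    0 ≤ x ⬝ᵥ (D *ᵥ x) - x ⬝ᵥ (G *ᵥ x) :=
  quadratic_form_symmetrization_general n N v hv lam hlam hnorm G D hG hD x
end

section
/- If additionally K^s_{c_s} > 0 for every step s, then the likelihood ratio between the original parameters μ and the importance sampling parameters λ has the closed form f(ω, μ)/f(ω, λ) = Π_{k=1}^n (μ_k/λ_k)^{U_k(ω)} · Π_{s=1}^m ⟨K^s, λ⟩ / ⟨K^s, μ⟩, where U_k(ω) = #{ s ∈ {1,…,m} : c_s = k }. -/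
theorem Fintype.prod_comp_eq_prod_pow_card_fiber {ι κ M : Type*} [Fintype ι] [Fintype κ]
    [DecidableEq κ] [CommMonoid M] (f : κ → M) (g : ι → κ) :
    ∏ i, f (g i) = ∏ j, f j ^ (Finset.univ.filter fun i => g i = j).card := by
  simp_rw [← Finset.prod_const, Finset.prod_fiberwise']

theorem mul_div_div_mul_div_eq_div_mul_div {K : Type*} [Field K] (a b k A B : K) (hk : k ≠ 0) :
    a * k / A / (b * k / B) = a / b * (B / A) := by
  rw [div_div_div_eq, mul_comm A, ← div_mul_div_comm, mul_div_mul_right _ _ hk]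

theorem likelihood_ratio_closed_form_general
    (n m : ℕ)
    (K : Fin m → Fin n → ℝ)
    (c : Fin m → Fin n) (hKc : ∀ s : Fin m, 0 < K s (c s))
    (mu lam : Fin n → ℝ) :
    (∏ s : Fin m, mu (c s) * K s (c s) / (∑ k : Fin n, K s k * mu k)) /
      (∏ s : Fin m, lam (c s) * K s (c s) / (∑ k : Fin n, K s k * lam k)) =
    (∏ k : Fin n, (mu k / lam k) ^ (Finset.univ.filter (fun s : Fin m => c s = k)).card) *
      ∏ s : Fin m, (∑ k : Fin n, K s k * lam k) / (∑ k : Fin n, K s k * mu k) := by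
  rw [← Finset.prod_div_distrib]
  simp_rw [mul_div_div_mul_div_eq_div_mul_div _ _ _ _ _ (hKc _).ne']
  rw [Finset.prod_mul_distrib, Fintype.prod_comp_eq_prod_pow_card_fiber (fun k => mu k / lam k)]

/-- Closed form of the likelihood ratio between the original parameters `μ` and the
importance sampling parameters `λ`:
`f(ω, μ)/f(ω, λ) = Π_k (μ_k/λ_k)^{U_k(ω)} · Π_s ⟨K^s, λ⟩/⟨K^s, μ⟩`. -/
theorem likelihood_ratio_closed_form
    (n m : ℕ) (hn : 0 < n) (hm : 0 < m)
    (K : Fin m → Fin n → ℝ) (hK : ∀ s k, 0 ≤ K s k)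
    (c : Fin m → Fin n) (hKc : ∀ s : Fin m, 0 < K s (c s))
    (mu lam : Fin n → ℝ) (hmu : ∀ k, 0 < mu k) (hlam : ∀ k, 0 < lam k)
    (hKmu : ∀ s : Fin m, 0 < ∑ k : Fin n, K s k * mu k)
    (hKlam : ∀ s : Fin m, 0 < ∑ k : Fin n, K s k * lam k) :
    (∏ s : Fin m, mu (c s) * K s (c s) / (∑ k : Fin n, K s k * mu k)) /
      (∏ s : Fin m, lam (c s) * K s (c s) / (∑ k : Fin n, K s k * lam k)) =
    (∏ k : Fin n, (mu k / lam k) ^ (Finset.univ.filter (fun s : Fin m => c s = k)).card) *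
      ∏ s : Fin m, (∑ k : Fin n, K s k * lam k) / (∑ k : Fin n, K s k * mu k) :=
  likelihood_ratio_closed_form_general n m K c hKc mu lam
end
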